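/- arXiv:2001.09721 — 3 statements merged into one kernel-verified Lean document; each statement's English description precedes it below -/
import Mathlib

section
/- Let K be a number field with ring of integers O, and let f ∈ O[X] with f(0) ≠ 0 be such that 0 is not a periodic point of f (i.e., f^(k)(0) ≠ 0 for all k ≥ 1). For α ∈ O and integers m > n ≥ 0 with f^(n)(α) ≠ 0, if f^(n)(α) = u · f^(m)(α) for some u ∈ O, then the ideal generated by f^(m)(α) divides the ideal generated by f^(m-n)(0). -/
open NumberField

theorem Ideal.span_singleton_dvd_span_singleton_of_dvd {R : Type*} [CommSemiring R] {a b : R}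
    (h : a ∣ b) : Ideal.span {a} ∣ Ideal.span {b} := by
  obtain ⟨c, rfl⟩ := h
  exact ⟨Ideal.span {c}, (Ideal.span_singleton_mul_span_singleton a c).symm⟩

namespace Polynomial

variable {R : Type*} [CommRing R]

theorem sub_dvd_iterate_eval_sub (f : R[X]) (x y : R) (k : ℕ) :
    x - y ∣ (fun z => f.eval z)^[k] x - (fun z => f.eval z)^[k] y := by
  induction k with
  | zero => simp
  | succ k ih =>
    simp only [Function.iterate_succ_apply']
    exact ih.trans (sub_dvd_eval_sub _ _ f)

/-- Reducing modulo `(f^[m] α)`, the orbit of `α` reaches `0` after `n` steps and then follows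
the orbit of `0`. -/
theorem iterate_eval_dvd_iterate_eval_zero_of_dvd (f : R[X]) (α : R) {m n : ℕ} (hnm : n ≤ m)
    (h : (fun z => f.eval z)^[m] α ∣ (fun z => f.eval z)^[n] α) :
    (fun z => f.eval z)^[m] α ∣ (fun z => f.eval z)^[m - n] 0 := by
  set F := fun z => f.eval z
  have hsplit : F^[m] α = F^[m - n] (F^[n] α) := by
    rw [← Function.iterate_add_apply, Nat.sub_add_cancel hnm]
  have hcongr : F^[m] α ∣ F^[m] α - F^[m - n] 0 :=
    calc F^[m] α ∣ F^[n] α - 0 := by rwa [sub_zero]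
      _ ∣ F^[m - n] (F^[n] α) - F^[m - n] 0 := sub_dvd_iterate_eval_sub f _ 0 _
      _ = F^[m] α - F^[m - n] 0 := by rw [hsplit]
  exact (dvd_sub_right dvd_rfl).mp hcongr

end Polynomial

theorem span_iterate_dvd_span_iterate_zero_general
    (K : Type*) [Field K]
    (f : Polynomial (𝓞 K))
    (α : 𝓞 K) (m n : ℕ) (hmn : n < m)
    (u : 𝓞 K) (hu : (fun x => f.eval x)^[n] α = u * (fun x => f.eval x)^[m] α) :
    Ideal.span {(fun x => f.eval x)^[m] α} ∣
      Ideal.span {(fun x => f.eval x)^[m - n] (0 : 𝓞 K)} :=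
  Ideal.span_singleton_dvd_span_singleton_of_dvd <|
    f.iterate_eval_dvd_iterate_eval_zero_of_dvd α hmn.le (hu ▸ dvd_mul_left _ u)

/-- If `f ∈ O[X]` has `f(0) ≠ 0`, `0` is not periodic, `f^(n)(α) ≠ 0` and
`f^(n)(α) = u · f^(m)(α)` with `u ∈ O` and `m > n ≥ 0`, then the ideal generated by
`f^(m)(α)` divides the ideal generated by `f^(m-n)(0)`. -/
theorem span_iterate_dvd_span_iterate_zero
    (K : Type*) [Field K] [NumberField K]
    (f : Polynomial (𝓞 K)) (hf0 : f.eval 0 ≠ 0)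
    (hper : ∀ k : ℕ, 1 ≤ k → (fun x => f.eval x)^[k] (0 : 𝓞 K) ≠ 0)
    (α : 𝓞 K) (m n : ℕ) (hmn : n < m)
    (hn0 : (fun x => f.eval x)^[n] α ≠ 0)
    (u : 𝓞 K) (hu : (fun x => f.eval x)^[n] α = u * (fun x => f.eval x)^[m] α) :
    Ideal.span {(fun x => f.eval x)^[m] α} ∣
      Ideal.span {(fun x => f.eval x)^[m - n] (0 : 𝓞 K)} :=
  span_iterate_dvd_span_iterate_zero_general K f α m n hmn u hu
end

section
/- Let K be a number field of degree d with r+1 archimedean places and unit rank r ≥ 1, regulator R, and let ε₁, …, ε_r be a fundamental system of units with max_i h(ε_i) ≤ A·R for a constant A. Then for every nonzero α ∈ O_K and every integer n ≥ 1 there exists a unit ε ∈ O_K^* such that for every archimedean place v: |log|ε^n α|_v − (1/d)·log N(α)| ≤ (1/2)·A·n·d²·R, where N(α) is the absolute norm of the ideal generated by α. -/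
/-!
By the product formula the vector `x_w = ℓ_w (log w(α) - d⁻¹ log N(α))` has coordinate sum `0`,
so by Dirichlet's unit theorem it is a real combination `∑ tᵢ cᵢ` of the vectors
`cᵢ = (ℓ_w log w(εᵢ))_w`. Multiplying `α` by `e ^ n` with `e = ∏ εᵢ ^ (-round (tᵢ / n))` replaces the
coefficients by `tᵢ - n round (tᵢ / n)`, of size at most `n / 2`. Since `cᵢ` also sums to `0`, each
coordinate is bounded by the sum of the positive parts, `|cᵢ w| ≤ d h(εᵢ) ≤ d A R`; with `ℓ_v ≥ 1`
and `r < d` this gives the bound.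
-/

open NumberField IsDedekindDomain

/-- The places of a number field `K`: archimedean (infinite) places together with
finite places, identified with nonzero prime ideals of the ring of integers. -/
abbrev PlaceOf (K : Type*) [Field K] [NumberField K] :=
  InfinitePlace K ⊕ HeightOneSpectrum (𝓞 K)

/-- The `P`-adic order of `α ∈ K` (junk value `0` for `α = 0`). -/
noncomputable def ordAt {K : Type*} [Field K] [NumberField K]
    (P : HeightOneSpectrum (𝓞 K)) (α : K) : ℤ :=
  if h : P.valuation K α = 0 then 0 else -Multiplicative.toAdd (WithZero.unzero h)

/-- The normalized local absolute value `‖α‖_v = |α|_v^{ℓ_v}` at a place `v`, so that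
`log⁺` of it is `ℓ_v · log⁺|α|_v`.  At a finite place `P` it is `N(P)^{-ord_P α}`
(with junk value `1` at `α = 0`). -/
noncomputable def localNorm {K : Type*} [Field K] [NumberField K] :
    PlaceOf K → K → ℝ
  | .inl w => fun α => (w α) ^ w.mult
  | .inr P => fun α => (Ideal.absNorm P.asIdeal : ℝ) ^ (-(ordAt P α))

/-- The partial (T-)height `h_T(α) = Σ_{v ∈ T} (ℓ_v/d) log⁺ |α|_v`. -/
noncomputable def heightOn (K : Type*) [Field K] [NumberField K]
    (T : Set (PlaceOf K)) (α : K) : ℝ :=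
  (Module.finrank ℚ K : ℝ)⁻¹ * ∑ᶠ v ∈ T, Real.log (max 1 (localNorm v α))

/-- The absolute logarithmic Weil height of `α ∈ K`. -/
noncomputable def height (K : Type*) [Field K] [NumberField K] (α : K) : ℝ :=
  heightOn K Set.univ α

open NumberField.InfinitePlace NumberField.Units NumberField.Units.dirichletUnitTheorem
open Module (finrank)
open Real (log posLog)

theorem abs_sub_mul_round_div_le {α : Type*} [Field α] [LinearOrder α] [IsStrictOrderedRing α]
    [FloorRing α] (t : α) {n : α} (hn : 0 < n) : |t - n * round (t / n)| ≤ n / 2 := by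
  have h : t - n * round (t / n) = n * (t / n - round (t / n)) := by field_simp
  rw [h, abs_mul, abs_of_pos hn]
  calc n * |t / n - round (t / n)| ≤ n * (1 / 2) := by gcongr; exact abs_sub_round _
    _ = n / 2 := by ring

theorem abs_le_sum_of_sum_eq_zero {ι : Type*} [Fintype ι] {f g : ι → ℝ} (hf : ∑ i, f i = 0)
    (hfg : ∀ i, f i ≤ g i) (hg : ∀ i, 0 ≤ g i) (i : ι) : |f i| ≤ ∑ j, g j := by
  classical
  have hgi : g i ≤ ∑ j, g j := Finset.single_le_sum (fun j _ => hg j) (Finset.mem_univ i)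
  refine abs_le.mpr ⟨?_, (hfg i).trans hgi⟩
  have hrest : ∑ j ∈ Finset.univ.erase i, f j = -f i := by
    rw [Finset.sum_erase_eq_sub (Finset.mem_univ i), hf, zero_sub]
  calc -(∑ j, g j) ≤ -(∑ j ∈ Finset.univ.erase i, g j) :=
        neg_le_neg <| Finset.sum_le_sum_of_subset_of_nonneg (Finset.erase_subset _ _)
          fun j _ _ => hg j
    _ ≤ -(∑ j ∈ Finset.univ.erase i, f j) := neg_le_neg <| Finset.sum_le_sum fun j _ => hfg j
    _ = f i := by rw [hrest, neg_neg]

section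

variable {K : Type*} [Field K]

theorem log_apply_prod_zpow {ι : Type*} [Fintype ι] (w : InfinitePlace K) (ε : ι → (𝓞 K)ˣ)
    (k : ι → ℤ) : log (w ((∏ i, ε i ^ k i : (𝓞 K)ˣ) : K)) = ∑ i, k i * log (w (ε i)) := by
  have hcoe : ((∏ i, ε i ^ k i : (𝓞 K)ˣ) : K) = ∏ i, (ε i : K) ^ k i := by
    simp_rw [← coe_zpow]
    exact map_prod ((Units.coeHom K).comp (Units.map (algebraMap (𝓞 K) K).toMonoidHom)) _ _
  simp_rw [hcoe, map_prod, map_zpow₀]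
  rw [Real.log_prod fun i _ => zpow_ne_zero _ ((map_ne_zero w).mpr (coe_ne_zero _))]
  simp_rw [Real.log_zpow]

def GeneratesModTorsion {ι : Type*} [Fintype ι] (ε : ι → (𝓞 K)ˣ) : Prop :=
  ∀ u : (𝓞 K)ˣ, ∃ (ζ : (𝓞 K)ˣ) (k : ι → ℤ), IsOfFinOrder ζ ∧ u = ζ * ∏ i, ε i ^ k i

variable [NumberField K]

theorem card_infinitePlace_le_finrank : Fintype.card (InfinitePlace K) ≤ finrank ℚ K := by
  have := card_add_two_mul_card_eq_rank K
  rw [card_eq_nrRealPlaces_add_nrComplexPlaces]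
  omega

theorem height_nonneg (x : K) : 0 ≤ height K x :=
  mul_nonneg (by positivity)
    (finsum_nonneg fun _ => finsum_nonneg fun _ => Real.log_nonneg (le_max_left _ _))

theorem localNorm_inr_coe_unit (P : HeightOneSpectrum (𝓞 K)) (u : (𝓞 K)ˣ) :
    localNorm (.inr P) (u : K) = 1 := by
  have hv : P.valuation K (u : K) = 1 := P.valuation_eq_one_iff_notMem.mpr fun hu =>
    P.isPrime.ne_top (Ideal.eq_top_of_isUnit_mem _ hu u.isUnit)
  simp [localNorm, ordAt, hv]
  rfl

theorem height_coe_unit (u : (𝓞 K)ˣ) :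
    height K (u : K) = (finrank ℚ K : ℝ)⁻¹ * ∑ w : InfinitePlace K, w.mult * posLog (w u) := by
  rw [height, heightOn, finsum_mem_univ]
  congr 1
  have hsupp : Function.support (fun v : PlaceOf K => log (max 1 (localNorm v (u : K)))) ⊆
      (Finset.univ.map .inl : Finset (PlaceOf K)) := by
    rintro (w | P) hP
    · simp
    · simp [localNorm_inr_coe_unit] at hP
  rw [finsum_eq_finsetSum_of_support_subset _ hsupp, Finset.sum_map]
  refine Finset.sum_congr rfl fun w _ => ?_
  simp only [Function.Embedding.inl_apply, localNorm]
  rw [← Real.posLog_eq_log_max_one (by positivity), Real.posLog_pow]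

theorem abs_mult_mul_log_le_finrank_mul_height (u : (𝓞 K)ˣ) (w : InfinitePlace K) :
    |w.mult * log (w u)| ≤ finrank ℚ K * height K (u : K) := by
  rw [height_coe_unit, ← mul_assoc, mul_inv_cancel₀ (by exact_mod_cast Module.finrank_pos.ne'),
    one_mul]
  exact abs_le_sum_of_sum_eq_zero (sum_mult_mul_log u)
    (fun w => mul_le_mul_of_nonneg_left (le_max_right _ _) (Nat.cast_nonneg _))
    (fun w => mul_nonneg (Nat.cast_nonneg _) Real.posLog_nonneg) w

theorem sum_mult_mul_log_eq_log_absNorm {α : 𝓞 K} (hα : α ≠ 0) :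
    ∑ w : InfinitePlace K, w.mult * log (w α) = log (Ideal.absNorm (Ideal.span {α})) := by
  have h := congrArg log (prod_eq_abs_norm (α : K))
  rw [Real.log_prod fun w _ => pow_ne_zero _ (by simpa using hα)] at h
  simp only [Real.log_pow] at h
  rw [h, Ideal.absNorm_span_singleton, Nat.cast_natAbs, ← Algebra.coe_norm_int, Rat.cast_abs,
    Rat.cast_intCast, Int.cast_abs]

theorem sum_mult_mul_sub_inv_finrank_mul_log_absNorm_eq_zero {α : 𝓞 K} (hα : α ≠ 0) :
    ∑ w : InfinitePlace K, w.mult *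
      (log (w α) - (finrank ℚ K : ℝ)⁻¹ * log (Ideal.absNorm (Ideal.span {α}))) = 0 := by
  have hmult : ∑ w : InfinitePlace K, (w.mult : ℝ) = finrank ℚ K := by exact_mod_cast sum_mult_eq
  have hd : (finrank ℚ K : ℝ) ≠ 0 := by exact_mod_cast Module.finrank_pos.ne'
  simp_rw [mul_sub, Finset.sum_sub_distrib, ← Finset.sum_mul, hmult, mul_inv_cancel_left₀ hd,
    sum_mult_mul_log_eq_log_absNorm hα, sub_self]

theorem span_logEmbedding_eq_top {ι : Type*} [Fintype ι] (ε : ι → (𝓞 K)ˣ)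
    (hfund : GeneratesModTorsion ε) :
    Submodule.span ℝ (Set.range fun i => logEmbedding K (Additive.ofMul (ε i))) = ⊤ := by
  rw [eq_top_iff, ← unitLattice_span_eq_top, Submodule.span_le]
  rintro _ ⟨u, -, rfl⟩
  obtain ⟨ζ, k, hζ, hu⟩ := hfund u.toMul
  have hζ : logEmbedding K (Additive.ofMul ζ) = 0 :=
    logEmbedding_eq_zero_iff.mpr ((CommGroup.mem_torsion _).mpr hζ)
  have : logEmbedding K u = ∑ i, k i • logEmbedding K (Additive.ofMul (ε i)) := by
    rw [← ofMul_toMul u, hu, ofMul_mul, map_add, hζ, zero_add, ofMul_prod, map_sum]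
    simp [ofMul_zpow, map_zsmul]
  change logEmbedding K u ∈ _
  rw [this]
  exact Submodule.sum_mem _ fun i _ => zsmul_mem (Submodule.subset_span (Set.mem_range_self i)) _

theorem exists_eq_sum_mul_mult_mul_log_of_sum_eq_zero {ι : Type*} [Fintype ι] (ε : ι → (𝓞 K)ˣ)
    (hfund : GeneratesModTorsion ε)
    {x : InfinitePlace K → ℝ} (hx : ∑ w, x w = 0) :
    ∃ t : ι → ℝ, ∀ w, x w = ∑ i, t i * (w.mult * log (w (ε i))) := by
  classical
  have hmem : (fun w : {w // w ≠ w₀} => x w) ∈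
      Submodule.span ℝ (Set.range fun i => logEmbedding K (Additive.ofMul (ε i))) := by
    rw [span_logEmbedding_eq_top ε hfund]
    exact Submodule.mem_top
  obtain ⟨t, ht⟩ := (Submodule.mem_span_range_iff_exists_fun ℝ).mp hmem
  set y : InfinitePlace K → ℝ := fun w => ∑ i, t i * (w.mult * log (w (ε i)))
  have hxy (w : {w // w ≠ w₀}) : x w = y w.1 := by
    simpa [y] using (congrFun ht w).symm
  have hy : ∑ w, y w = 0 := by
    simp only [y]
    rw [Finset.sum_comm]
    simp [← Finset.mul_sum, sum_mult_mul_log]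
  refine ⟨t, fun w => ?_⟩
  by_cases hw : w = w₀
  · rw [Fintype.sum_eq_add_sum_subtype_ne _ w₀] at hx hy
    simp only [hxy] at hx
    rw [hw]
    linarith
  · exact hxy ⟨w, hw⟩

theorem exists_unit_mult_mul_abs_log_sub_le {ι : Type*} [Fintype ι] (ε : ι → (𝓞 K)ˣ)
    (hfund : GeneratesModTorsion ε)
    {α : 𝓞 K} (hα : α ≠ 0) {n : ℕ} (hn : 0 < n) {C : ℝ}
    (hC : ∀ i (w : InfinitePlace K), |w.mult * log (w (ε i))| ≤ C) :
    ∃ e : (𝓞 K)ˣ, ∀ v : InfinitePlace K, v.mult * |log (v ((e : K) ^ n * α)) -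
      (finrank ℚ K : ℝ)⁻¹ * log (Ideal.absNorm (Ideal.span {α}))| ≤
        Fintype.card ι * (n / 2 * C) := by
  obtain ⟨t, ht⟩ := exists_eq_sum_mul_mult_mul_log_of_sum_eq_zero ε hfund
    (sum_mult_mul_sub_inv_finrank_mul_log_absNorm_eq_zero hα)
  refine ⟨∏ i, ε i ^ (-round (t i / n)), fun v => ?_⟩
  have hv : v (α : K) ≠ 0 := by simpa using hα
  have key : v.mult * (log (v (((∏ i, ε i ^ (-round (t i / n)) : (𝓞 K)ˣ) : K) ^ n * α)) -
      (finrank ℚ K : ℝ)⁻¹ * log (Ideal.absNorm (Ideal.span {α}))) =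
        ∑ i, (t i - n * round (t i / n)) * (v.mult * log (v (ε i))) := by
    rw [map_mul, map_pow, Real.log_mul (pow_ne_zero _ ((map_ne_zero v).mpr (coe_ne_zero _))) hv,
      Real.log_pow, log_apply_prod_zpow, add_sub_assoc, mul_add, ht v, Finset.mul_sum,
      Finset.mul_sum, ← Finset.sum_add_distrib]
    refine Finset.sum_congr rfl fun i _ => ?_
    push_cast
    ring
  have hn' : (0 : ℝ) < n := by exact_mod_cast hn
  calc _ = |∑ i, (t i - n * round (t i / n)) * (v.mult * log (v (ε i)))| := by
        rw [← key, abs_mul, Nat.abs_cast]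
    _ ≤ ∑ _i : ι, n / 2 * C := by
        refine (Finset.abs_sum_le_sum_abs _ _).trans (Finset.sum_le_sum fun i _ => ?_)
        rw [abs_mul]
        exact mul_le_mul (abs_sub_mul_round_div_le _ hn') (hC i v) (abs_nonneg _) (by positivity)
    _ = Fintype.card ι * (n / 2 * C) := by simp

end

/-- Approximation of the norm by units: if `K` has `r+1` archimedean places, unit rank
`r ≥ 1`, regulator `R`, and a fundamental system of units `ε₁, …, ε_r` of height at most
`A·R`, then for every nonzero `α ∈ 𝓞 K` and `n ≥ 1` there is a unit `ε` with
`|log|ε^n α|_v - (1/d) log N(α)| ≤ (1/2)·A·n·d²·R` at every archimedean place `v`. -/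
theorem exists_unit_approx
    (K : Type*) [Field K] [NumberField K]
    (r : ℕ) (hr : Nat.card (InfinitePlace K) = r + 1) (hr1 : 1 ≤ r)
    (ε : Fin r → (𝓞 K)ˣ)
    (hfund : ∀ u : (𝓞 K)ˣ, ∃ (ζ : (𝓞 K)ˣ) (k : Fin r → ℤ),
      IsOfFinOrder ζ ∧ u = ζ * ∏ i, ε i ^ k i)
    (A : ℝ)
    (hA : ∀ i, height K ((ε i : 𝓞 K) : K) ≤ A * Units.regulator K)
    (α : 𝓞 K) (hα : α ≠ 0) (n : ℕ) (hn : 1 ≤ n) :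
    ∃ e : (𝓞 K)ˣ, ∀ v : InfinitePlace K,
      |Real.log (v (((e : 𝓞 K) : K) ^ n * (α : K)))
          - (Module.finrank ℚ K : ℝ)⁻¹ * Real.log (Ideal.absNorm (Ideal.span {α}))|
        ≤ (1 / 2) * A * n * (Module.finrank ℚ K : ℝ) ^ 2 * Units.regulator K := by
  have hrd : (r : ℝ) ≤ finrank ℚ K := by
    have := card_infinitePlace_le_finrank (K := K)
    rw [← Nat.card_eq_fintype_card, hr] at this
    exact_mod_cast this.trans' (Nat.le_succ r)
  have hAR : 0 ≤ A * regulator K := (height_nonneg _).trans (hA ⟨0, hr1⟩)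
  obtain ⟨e, he⟩ := exists_unit_mult_mul_abs_log_sub_le ε hfund hα hn
    (C := finrank ℚ K * (A * regulator K)) fun i w =>
      (abs_mult_mul_log_le_finrank_mul_height (ε i) w).trans (by gcongr; exact hA i)
  refine ⟨e, fun v => ?_⟩
  calc _ ≤ v.mult * |log (v ((e : K) ^ n * α)) -
        (finrank ℚ K : ℝ)⁻¹ * log (Ideal.absNorm (Ideal.span {α}))| :=
        le_mul_of_one_le_left (abs_nonneg _) one_le_mult
    _ ≤ r * (n / 2 * (finrank ℚ K * (A * regulator K))) := by simpa using he v
    _ ≤ finrank ℚ K * (n / 2 * (finrank ℚ K * (A * regulator K))) := by gcongr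
    _ = _ := by ring
end

section
/- Let K be a number field, f ∈ O_K[X] with 0 not periodic, α ∈ O_K, m > k ≥ 1 integers, and suppose h_{S_k}(f^(m)(α)^{-1}) < h(f^(m)(α)), where S_k consists of the archimedean places together with the finite places of primes dividing one of f^(1)(0), …, f^(k)(0). Then there exists a prime ideal p of O_K dividing f^(m)(α) that divides none of f^(m-k)(α), f^(m-k+1)(α), …, f^(m-1)(α). -/
open NumberField IsDedekindDomain

/-! Write `β = f^[m] α`. If every prime dividing `β` lay in `S_k`, then `|β⁻¹|_v = 1` at every
place `v ∉ S_k`, so `h_{S_k}(β⁻¹) = h(β⁻¹) = h(β)` by the product formula. Hence some prime `P`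
dividing `β` avoids `f^[i] 0` for `1 ≤ i ≤ k`. If `P` also divided `f^[j] α` with
`m - k ≤ j < m`, then `a - b ∣ f^[n] a - f^[n] b` applied to `a = f^[j] α`, `b = 0`, `n = m - j`
would put `f^[m - j] 0` in `P`. -/

namespace Polynomial

variable {R : Type*} [CommRing R]

theorem sub_dvd_iterate_eval_sub_s14 (p : R[X]) (a b : R) (n : ℕ) :
    a - b ∣ (fun x => p.eval x)^[n] a - (fun x => p.eval x)^[n] b := by
  induction n with
  | zero => simp
  | succ n ih =>
    simp only [Function.iterate_succ_apply']
    exact ih.trans (sub_dvd_eval_sub _ _ p)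

theorem iterate_eval_zero_mem_of_iterate_eval_mem (p : R[X]) {I : Ideal R} {a : R} {i n : ℕ}
    (hi : (fun x => p.eval x)^[i] a ∈ I) (hin : (fun x => p.eval x)^[n + i] a ∈ I) :
    (fun x => p.eval x)^[n] 0 ∈ I := by
  have hdvd := sub_dvd_iterate_eval_sub_s14 p ((fun x => p.eval x)^[i] a) 0 n
  rw [sub_zero, ← Function.iterate_add_apply] at hdvd
  simpa using I.sub_mem hin (I.mem_of_dvd hdvd hi)

end Polynomial

theorem finsum_sum_type {α β M : Type*} [AddCommMonoid M] (g : α ⊕ β → M)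
    (hl : (Function.support (g ∘ Sum.inl)).Finite) (hr : (Function.support (g ∘ Sum.inr)).Finite) :
    ∑ᶠ v, g v = ∑ᶠ a, g (Sum.inl a) + ∑ᶠ b, g (Sum.inr b) := by
  have hl' : (Set.range Sum.inl ∩ Function.support g).Finite :=
    (hl.image Sum.inl).subset (by rintro _ ⟨⟨a, rfl⟩, ha⟩; exact ⟨a, ha, rfl⟩)
  have hr' : (Set.range Sum.inr ∩ Function.support g).Finite :=
    (hr.image Sum.inr).subset (by rintro _ ⟨⟨b, rfl⟩, hb⟩; exact ⟨b, hb, rfl⟩)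
  rw [← finsum_mem_univ, ← Set.range_inl_union_range_inr,
    finsum_mem_union' Set.isCompl_range_inl_range_inr.disjoint hl' hr',
    finsum_mem_range Sum.inl_injective, finsum_mem_range Sum.inr_injective]

namespace NumberField

open Real

variable {K : Type*} [Field K] [NumberField K]

theorem localNorm_nonneg (v : PlaceOf K) (x : K) : 0 ≤ localNorm v x := by
  rcases v with w | P
  · exact pow_nonneg (apply_nonneg w x) _
  · exact zpow_nonneg (Nat.cast_nonneg _) _

theorem localNorm_inr_eq (P : HeightOneSpectrum (𝓞 K)) {x : K} (hx : x ≠ 0) :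
    localNorm (Sum.inr P) x = FinitePlace.mk P x := by
  have hv : P.valuation K x ≠ 0 := (Valuation.ne_zero_iff _).2 hx
  rw [FinitePlace.mk_apply, FinitePlace.norm_embedding', WithZeroMulInt.toNNReal_neg_apply _ hv]
  simp [localNorm, ordAt, hv]

theorem posLog_localNorm_inl (w : InfinitePlace K) (x : K) :
    log⁺ (localNorm (Sum.inl w) x) = w.mult * log⁺ (w x) :=
  posLog_pow _ _

-- At `x = 0` the junk value `localNorm (Sum.inr P) 0 = 1` and `FinitePlace.mk P 0 = 0`
-- both have `log⁺ = 0`.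
theorem posLog_localNorm_inr (P : HeightOneSpectrum (𝓞 K)) (x : K) :
    log⁺ (localNorm (Sum.inr P) x) = log⁺ (FinitePlace.mk P x) := by
  rcases eq_or_ne x 0 with rfl | hx
  · simp [localNorm, ordAt]
  · rw [localNorm_inr_eq P hx]

theorem finite_support_posLog_finitePlace_mk (x : K) :
    (Function.support fun P : HeightOneSpectrum (𝓞 K) => log⁺ (FinitePlace.mk P x)).Finite := by
  rcases eq_or_ne x 0 with rfl | hx
  · simp
  · refine ((FinitePlace.hasFiniteMulSupport hx).preimage
      FinitePlace.equivHeightOneSpectrum.symm.injective.injOn).subset fun P hP h1 => hP ?_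
    change FinitePlace.mk P x = 1 at h1
    simp [h1]

theorem height_eq_logHeight₁ (x : K) :
    height K x = (Module.finrank ℚ K : ℝ)⁻¹ * Height.logHeight₁ x := by
  have hposLog (v : PlaceOf K) : log (max 1 (localNorm v x)) = log⁺ (localNorm v x) :=
    (posLog_eq_log_max_one (localNorm_nonneg v x)).symm
  have hfin : (Function.support fun P : HeightOneSpectrum (𝓞 K) =>
      log⁺ (localNorm (Sum.inr P) x)).Finite := by
    simpa only [posLog_localNorm_inr] using finite_support_posLog_finitePlace_mk x
  rw [height, heightOn, finsum_mem_univ, finsum_congr hposLog,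
    finsum_sum_type _ (Set.toFinite _) hfin, finsum_eq_sum_of_fintype, logHeight₁_eq]
  simp only [posLog_localNorm_inl, posLog_localNorm_inr]
  congr 2
  exact finsum_comp_equiv FinitePlace.equivHeightOneSpectrum.symm (f := fun v => log⁺ (v x))

theorem height_inv (x : K) : height K x⁻¹ = height K x := by
  rw [height_eq_logHeight₁, height_eq_logHeight₁, Height.logHeight₁_inv]

theorem heightOn_eq_height {T : Set (PlaceOf K)} {x : K} (hT : ∀ v ∉ T, localNorm v x ≤ 1) :
    heightOn K T x = height K x := by
  rw [height, heightOn, heightOn,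
    finsum_mem_inter_support_eq' (fun v => log (max 1 (localNorm v x))) T Set.univ]
  intro v hv
  simp only [Set.mem_univ, iff_true]
  by_contra hvT
  exact hv (by simp only [max_eq_left (hT v hvT), log_one])

theorem localNorm_inr_inv_eq_one {P : HeightOneSpectrum (𝓞 K)} {β : 𝓞 K}
    (hβ : β ∉ P.asIdeal) : localNorm (Sum.inr P) (β : K)⁻¹ = 1 := by
  have hβ0 : (β : K) ≠ 0 :=
    RingOfIntegers.coe_ne_zero_iff.mpr fun h => hβ (h ▸ P.asIdeal.zero_mem)
  rw [localNorm_inr_eq P (inv_ne_zero hβ0), map_inv₀, FinitePlace.mk_apply,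
    RingOfIntegers.coe_eq_algebraMap, (FinitePlace.norm_eq_one_iff_notMem K P β).2 hβ, inv_one]

theorem heightOn_inv_eq_height {T : Set (PlaceOf K)} {β : 𝓞 K}
    (hinf : Set.range Sum.inl ⊆ T)
    (hfin : ∀ P : HeightOneSpectrum (𝓞 K), β ∈ P.asIdeal → Sum.inr P ∈ T) :
    heightOn K T (β : K)⁻¹ = height K (β : K) := by
  rw [heightOn_eq_height, height_inv]
  rintro (w | P) hv
  · exact absurd (hinf ⟨w, rfl⟩) hv
  · exact (localNorm_inr_inv_eq_one fun hβ => hv (hfin P hβ)).le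

end NumberField

theorem exists_prime_dvd_iterate_not_dvd_previous_general
    (K : Type*) [Field K] [NumberField K]
    (f : Polynomial (𝓞 K))
    (α : 𝓞 K) (m k : ℕ)
    (hlt : heightOn K
        (Set.range (Sum.inl : InfinitePlace K → PlaceOf K) ∪
          Sum.inr '' {P : HeightOneSpectrum (𝓞 K) |
            ∃ j : ℕ, 1 ≤ j ∧ j ≤ k ∧ (fun x => f.eval x)^[j] (0 : 𝓞 K) ∈ P.asIdeal})
        ((((fun x => f.eval x)^[m] α : 𝓞 K) : K)⁻¹)
      < height K (((fun x => f.eval x)^[m] α : 𝓞 K) : K)) :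
    ∃ P : HeightOneSpectrum (𝓞 K),
      (fun x => f.eval x)^[m] α ∈ P.asIdeal ∧
      ∀ j : ℕ, m - k ≤ j → j < m → (fun x => f.eval x)^[j] α ∉ P.asIdeal := by
  obtain ⟨P, hmP, hP⟩ : ∃ P : HeightOneSpectrum (𝓞 K), (fun x => f.eval x)^[m] α ∈ P.asIdeal ∧
      ¬ ∃ j : ℕ, 1 ≤ j ∧ j ≤ k ∧ (fun x => f.eval x)^[j] (0 : 𝓞 K) ∈ P.asIdeal := by
    by_contra! h
    exact hlt.ne (heightOn_inv_eq_height Set.subset_union_left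
      fun P hP => Or.inr ⟨P, h P hP, rfl⟩)
  refine ⟨P, hmP, fun j hj hjm hjP => hP ⟨m - j, by omega, by omega, ?_⟩⟩
  exact f.iterate_eval_zero_mem_of_iterate_eval_mem hjP (by rwa [Nat.sub_add_cancel hjm.le])

/-- If `h_{S_k}(f^(m)(α)⁻¹) < h(f^(m)(α))`, where `S_k` consists of the archimedean places
together with the primes dividing one of `f^(1)(0), …, f^(k)(0)`, then some prime ideal
divides `f^(m)(α)` but none of `f^(m-k)(α), …, f^(m-1)(α)`. -/
theorem exists_prime_dvd_iterate_not_dvd_previous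
    (K : Type*) [Field K] [NumberField K]
    (f : Polynomial (𝓞 K))
    (hper : ∀ j : ℕ, 1 ≤ j → (fun x => f.eval x)^[j] (0 : 𝓞 K) ≠ 0)
    (α : 𝓞 K) (m k : ℕ) (hk : 1 ≤ k) (hkm : k < m)
    (hlt : heightOn K
        (Set.range (Sum.inl : InfinitePlace K → PlaceOf K) ∪
          Sum.inr '' {P : HeightOneSpectrum (𝓞 K) |
            ∃ j : ℕ, 1 ≤ j ∧ j ≤ k ∧ (fun x => f.eval x)^[j] (0 : 𝓞 K) ∈ P.asIdeal})
        ((((fun x => f.eval x)^[m] α : 𝓞 K) : K)⁻¹)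
      < height K (((fun x => f.eval x)^[m] α : 𝓞 K) : K)) :
    ∃ P : HeightOneSpectrum (𝓞 K),
      (fun x => f.eval x)^[m] α ∈ P.asIdeal ∧
      ∀ j : ℕ, m - k ≤ j → j < m → (fun x => f.eval x)^[j] α ∉ P.asIdeal :=
  exists_prime_dvd_iterate_not_dvd_previous_general K f α m k hlt
end
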